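/- Let G be a finite group and χ a complex irreducible character of G. Then m_χ = Σ_{a∈G} Σ_{b∈G} |C_G(ab)b ∩ C_G(a)| · χ([a,b]) is a real number, i.e. conj(m_χ) = m_χ. -/

import Mathlib

/-- `|C_G(ab)b ∩ C_G(a)|`, where `C_G(x)` is the centralizer of `x`. -/
noncomputable def centInt {G : Type} [Group G] (a b : G) : ℕ :=
  Nat.card {x : G | x * b⁻¹ ∈ Subgroup.centralizer ({a * b} : Set G) ∧
    x ∈ Subgroup.centralizer ({a} : Set G)}

/-!
Since `g` has finite order, the eigenvalues of `V.ρ g` are roots of unity, so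
`conj (χ g) = χ g⁻¹`: the eigenvalues of an inverse matrix are the inverses of the eigenvalues,
read off from the reversed characteristic polynomial. Hence conjugating `m_χ` replaces
`χ [a, b]` by `χ [a, b]⁻¹`. The map `(a, b, x) ↦ (x b⁻¹, b, a b)` is an involution of the
triples with `x ∈ C_G(ab)b ∩ C_G(a)`, and it sends `[a, b]` to `[a, b]⁻¹`; reindexing the sum
along it gives back `m_χ`.
-/

open Polynomial Subgroup

theorem Polynomial.reverse_multiset_prod {R : Type*} [CommSemiring R] [NoZeroDivisors R]
    (s : Multiset R[X]) : s.prod.reverse = (s.map reverse).prod := by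
  induction s using Multiset.induction with
  | empty => simpa using reverse_C (1 : R)
  | cons p s ih => simp [reverse_mul_of_domain, ih]

theorem Polynomial.reverse_X_sub_C {R : Type*} [Ring R] [Nontrivial R] (a : R) :
    (X - C a).reverse = 1 - C a * X := by
  have hX : (X : R[X]).reverse = 1 := by
    have := reverse_mul_X (C (1 : R))
    rwa [reverse_C, C_1, one_mul] at this
  rw [sub_eq_add_neg, ← C_neg, reverse_add_C, hX]
  simp [sub_eq_add_neg]

theorem Polynomial.reverse_X_sub_C_of_ne_zero {K : Type*} [Field K] {a : K} (ha : a ≠ 0) :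
    (X - C a).reverse = C (-a) * (X - C a⁻¹) := by
  rw [reverse_X_sub_C, mul_sub, ← C_mul, neg_mul, mul_inv_cancel₀ ha, C_neg, C_neg, C_1]
  ring

theorem Polynomial.roots_reverse_prod_X_sub_C {K : Type*} [Field K] {s : Multiset K}
    (hs : 0 ∉ s) : (s.map fun a => X - C a).prod.reverse.roots = s.map (·⁻¹) := by
  have hfactor : ∀ a ∈ s, (X - C a).reverse = C (-a) * (X - C a⁻¹) :=
    fun a ha => reverse_X_sub_C_of_ne_zero (ne_of_mem_of_not_mem ha hs)
  have hconst : (s.map fun a => C (-a)).prod = C (s.map (-·)).prod := by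
    rw [map_multiset_prod, Multiset.map_map]; rfl
  have hconst_ne : (s.map (-·)).prod ≠ 0 :=
    Multiset.prod_ne_zero (by simpa using hs)
  rw [reverse_multiset_prod, Multiset.map_map, Function.comp_def, Multiset.map_congr rfl hfactor,
    Multiset.prod_map_mul, hconst, roots_C_mul _ hconst_ne]
  simpa [Multiset.map_map, Function.comp_def] using roots_multiset_prod_X_sub_C (s.map (·⁻¹))

namespace Matrix
variable {K n : Type*} [Field K] [Fintype n] [DecidableEq n]

theorem roots_charpoly_inv [IsAlgClosed K] (A : Matrix n n K) (hA : IsUnit A) :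
    A⁻¹.charpoly.roots = A.charpoly.roots.map (·⁻¹) := by
  have h0 : (0 : K) ∉ A.charpoly.roots := by
    rw [mem_roots A.charpoly_monic.ne_zero, ← mem_spectrum_iff_isRoot_charpoly,
      spectrum.zero_mem_iff, not_not]
    exact hA
  have hprod := (IsAlgClosed.splits A.charpoly).eq_prod_roots_of_monic A.charpoly_monic
  have hne := A⁻¹.charpoly_monic.ne_zero
  rw [charpoly_inv A hA, ← reverse_charpoly] at hne ⊢
  rw [roots_mul hne, hprod, roots_reverse_prod_X_sub_C h0]
  simpa using roots_C ((-1) ^ Fintype.card n * A.det⁻¹)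

theorem pow_eq_one_of_mem_roots_charpoly {A : Matrix n n K} {N : ℕ} (hA : A ^ N = 1) {μ : K}
    (hμ : μ ∈ A.charpoly.roots) : μ ^ N = 1 := by
  rw [mem_roots A.charpoly_monic.ne_zero, ← mem_spectrum_iff_isRoot_charpoly] at hμ
  rcases subsingleton_or_nontrivial (Matrix n n K) with _ | _
  · simp [spectrum.of_subsingleton] at hμ
  · simpa [hA, spectrum.one_eq] using spectrum.pow_mem_pow A N hμ

theorem conj_trace_eq_trace_inv {A : Matrix n n ℂ} {N : ℕ} (hN : N ≠ 0) (hA : A ^ N = 1) :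
    starRingEnd ℂ A.trace = A⁻¹.trace := by
  rw [trace_eq_sum_roots_charpoly, trace_eq_sum_roots_charpoly,
    roots_charpoly_inv A (.of_pow_eq_one hA hN), map_multiset_sum]
  congr 1
  refine Multiset.map_congr rfl fun μ hμ => ?_
  exact (Complex.inv_eq_conj (Complex.norm_eq_one_of_pow_eq_one
    (pow_eq_one_of_mem_roots_charpoly hA hμ) hN)).symm

end Matrix

theorem FDRep.conj_char_eq_char_inv {G : Type} [Group G] (V : FDRep ℂ G) {g : G}
    (hg : IsOfFinOrder g) : starRingEnd ℂ (V.character g) = V.character g⁻¹ := by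
  let b := Module.finBasis ℂ V
  let φ : G →* Matrix (Fin (Module.finrank ℂ V)) (Fin (Module.finrank ℂ V)) ℂ :=
    (LinearMap.toMatrixAlgEquiv b).toMonoidHom.comp V.ρ
  have hchar : ∀ h, V.character h = (φ h).trace := fun h =>
    LinearMap.trace_eq_matrix_trace ℂ b (V.ρ h)
  have hinv : φ g⁻¹ = (φ g)⁻¹ :=
    (Matrix.inv_eq_left_inv (by rw [← map_mul, inv_mul_cancel, map_one])).symm
  rw [hchar, hchar, hinv]
  exact Matrix.conj_trace_eq_trace_inv hg.orderOf_pos.ne'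
    (by rw [← map_pow, pow_orderOf_eq_one, map_one])

section
variable {G : Type} [Group G]

def centIntSet (a b : G) : Set G :=
  {x | x * b⁻¹ ∈ centralizer {a * b} ∧ x ∈ centralizer {a}}

theorem mem_centIntSet_iff (a b x : G) :
    x ∈ centIntSet a b ↔ a * b * (x * b⁻¹) = x * b⁻¹ * (a * b) ∧ a * x = x * a := by
  simp [centIntSet, mem_centralizer_iff]

theorem swap_mem_centIntSet_iff {a b x : G} :
    a * b ∈ centIntSet (x * b⁻¹) b ↔ x ∈ centIntSet a b := by
  rw [mem_centIntSet_iff, mem_centIntSet_iff, mul_inv_cancel_right, inv_mul_cancel_right,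
    and_comm, eq_comm, @eq_comm _ (x * a)]

theorem commutator_swap_eq_inv {a b x : G} (h : x ∈ centIntSet a b) :
    (x * b⁻¹)⁻¹ * b⁻¹ * (x * b⁻¹) * b = (a⁻¹ * b⁻¹ * a * b)⁻¹ := by
  rw [mem_centIntSet_iff] at h
  calc (x * b⁻¹)⁻¹ * b⁻¹ * (x * b⁻¹) * b
      = (a * b * (x * b⁻¹))⁻¹ * (a * x) := by group
    _ = (x * b⁻¹ * (a * b))⁻¹ * (x * a) := by rw [h.1, h.2]
    _ = (a⁻¹ * b⁻¹ * a * b)⁻¹ := by group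

def centIntSwap (t : G × G × G) : G × G × G := (t.2.2 * t.2.1⁻¹, t.2.1, t.1 * t.2.1)

theorem centIntSwap_involutive : Function.Involutive (centIntSwap (G := G)) := by
  intro t; simp [centIntSwap]

variable [Fintype G] {M : Type*} [AddCommMonoid M]

open Classical in
theorem sum_centInt_smul (F : G → G → M) :
    ∑ a, ∑ b, centInt a b • F a b =
      ∑ t : G × G × G, if t.2.2 ∈ centIntSet t.1 t.2.1 then F t.1 t.2.1 else 0 := by
  rw [Fintype.sum_prod_type]
  refine Finset.sum_congr rfl fun a _ => ?_
  rw [Fintype.sum_prod_type]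
  refine Finset.sum_congr rfl fun b _ => ?_
  rw [Finset.sum_ite, Finset.sum_const_zero, add_zero]
  dsimp only
  rw [Finset.sum_const, ← Fintype.card_subtype, ← Nat.card_eq_fintype_card]
  rfl

theorem sum_centInt_smul_inv (f : G → M) :
    ∑ a, ∑ b, centInt a b • f (a⁻¹ * b⁻¹ * a * b)⁻¹ =
      ∑ a, ∑ b, centInt a b • f (a⁻¹ * b⁻¹ * a * b) := by
  classical
  rw [sum_centInt_smul, sum_centInt_smul]
  refine Fintype.sum_equiv centIntSwap_involutive.toPerm _ _ fun ⟨a, b, x⟩ => ?_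
  simp only [Function.Involutive.coe_toPerm, centIntSwap, swap_mem_centIntSet_iff]
  split_ifs with h
  · rw [commutator_swap_eq_inv h]
  · rfl
end

theorem stmt7_general {G : Type} [Group G] [Fintype G]
    (V : FDRep ℂ G) :
    (starRingEnd ℂ)
        (∑ a : G, ∑ b : G, (centInt a b : ℂ) * V.character (a⁻¹ * b⁻¹ * a * b))
      = ∑ a : G, ∑ b : G, (centInt a b : ℂ) * V.character (a⁻¹ * b⁻¹ * a * b) := by
  have hconj (g : G) : starRingEnd ℂ (V.character g) = V.character g⁻¹ :=
    V.conj_char_eq_char_inv (isOfFinOrder_of_finite g)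
  simp only [map_sum, map_mul, map_natCast, hconj]
  simpa only [nsmul_eq_mul] using sum_centInt_smul_inv V.character

theorem stmt7 {G : Type} [Group G] [Fintype G]
    (V : FDRep ℂ G) (hV : CategoryTheory.Simple V) :
    (starRingEnd ℂ)
        (∑ a : G, ∑ b : G, (centInt a b : ℂ) * V.character (a⁻¹ * b⁻¹ * a * b))
      = ∑ a : G, ∑ b : G, (centInt a b : ℂ) * V.character (a⁻¹ * b⁻¹ * a * b) :=
  stmt7_general V
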